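/- For all φ₀, φ₁ with 0 < φ₀ < φ₁ < π/2, every natural number k, and every α ∈ (φ₁, π/2), one has (4k+2)T(α) + T₁(α, φ₀) − T₁(α, φ₁) > (4k+1)T(φ₁) + T₁(φ₁, φ₀) and 4(k+1)T(α) − T₁(α, φ₀) − T₁(α, φ₁) > (4k+3)T(φ₁) − T₁(φ₁, φ₀); that is, the times of the k-winding orbits of types C_r and D exceed the critical times T_{*k}(φ₁) and T_k^*(φ₁), respectively. -/

import Mathlib

open Real

/-- The time map `T(α) = ∫₀^α dx / √(cos 2x − cos 2α)`. -/
noncomputable def timeMapT (α : ℝ) : ℝ :=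
  ∫ x in (0:ℝ)..α, 1 / Real.sqrt (Real.cos (2 * x) - Real.cos (2 * α))

/-- The time map `T₁(α, φ) = ∫₀^φ dx / √(cos 2x − cos 2α)`. -/
noncomputable def timeMapT1 (α φ : ℝ) : ℝ :=
  ∫ x in (0:ℝ)..φ, 1 / Real.sqrt (Real.cos (2 * x) - Real.cos (2 * α))

/-!
Write `f_α(x) = 1 / √(cos 2x − cos 2α)`, so that `T(α) = ∫₀^α f_α` and `T₁(α, φ) = ∫₀^φ f_α`.
Three facts give both inequalities. First, `T` is nondecreasing: substituting `x = c t` with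
`c = α / β ≥ 1` turns `T(α)` into `∫₀^β c f_α(c t) dt`, and `c f_α(c t) ≥ f_β(t)` because
`cos 2x − cos 2y = 2 sin (x + y) sin (y − x)` and the concavity of `sin` on `[0, π]` gives
`sin (c s) ≤ c sin s`. Second, `f_α < f_{φ₁}` on `[0, φ₁)` for `α > φ₁`, so the pieces of `T₁`
on `[0, φ₀]` and `[φ₀, φ₁]` decrease when `φ₁` is replaced by `α`. Third, `T₁(α, φ₁) < T(α)`
since `f_α > 0` on `(φ₁, α)`. The singularity of `f_α` at `x = α` is integrable since
`cos 2x − cos 2α ≥ (2/π) sin 2α · (α − x)` on `[0, α]`.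
-/

open Set MeasureTheory intervalIntegral

noncomputable def timeIntegrand (α x : ℝ) : ℝ :=
  1 / √(cos (2 * x) - cos (2 * α))

lemma timeMapT1_eq_integral (α φ : ℝ) :
    timeMapT1 α φ = ∫ x in (0:ℝ)..φ, timeIntegrand α x := rfl

lemma timeMapT_eq_timeMapT1 (α : ℝ) : timeMapT α = timeMapT1 α α := rfl

lemma cos_two_mul_sub_cos_two_mul (x y : ℝ) :
    cos (2 * x) - cos (2 * y) = 2 * sin (x + y) * sin (y - x) := by
  rw [cos_sub_cos, show (2 * x - 2 * y) / 2 = -(y - x) by ring,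
    show (2 * x + 2 * y) / 2 = x + y by ring, sin_neg]
  ring

lemma cos_two_mul_sub_cos_two_mul_pos {x y : ℝ} (hx : 0 ≤ x) (hxy : x < y) (hy : y ≤ π / 2) :
    0 < cos (2 * x) - cos (2 * y) :=
  sub_pos.2 (cos_lt_cos_of_nonneg_of_le_pi (by linarith) (by linarith) (by linarith))

lemma timeIntegrand_pos {α x : ℝ} (hx : 0 ≤ x) (hxα : x < α) (hα : α ≤ π / 2) :
    0 < timeIntegrand α x :=
  one_div_pos.2 (sqrt_pos.2 (cos_two_mul_sub_cos_two_mul_pos hx hxα hα))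

lemma timeIntegrand_le_of_le {α β x : ℝ} (hx : 0 ≤ x) (hxβ : x < β) (hβα : β ≤ α)
    (hα : α ≤ π / 2) : timeIntegrand α x ≤ timeIntegrand β x := by
  have hcos : cos (2 * α) ≤ cos (2 * β) :=
    cos_le_cos_of_nonneg_of_le_pi (by linarith) (by linarith) (by linarith)
  exact one_div_le_one_div_of_le (sqrt_pos.2 (cos_two_mul_sub_cos_two_mul_pos hx hxβ (by linarith)))
    (sqrt_le_sqrt (by linarith))

lemma timeIntegrand_lt_of_lt {α β x : ℝ} (hx : 0 ≤ x) (hxβ : x < β) (hβα : β < α)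
    (hα : α ≤ π / 2) : timeIntegrand α x < timeIntegrand β x := by
  have hcos : cos (2 * α) < cos (2 * β) :=
    cos_lt_cos_of_nonneg_of_le_pi (by linarith) (by linarith) (by linarith)
  have hβ := cos_two_mul_sub_cos_two_mul_pos hx hxβ (by linarith)
  exact one_div_lt_one_div_of_lt (sqrt_pos.2 hβ) (sqrt_lt_sqrt hβ.le (by linarith))

lemma sin_mul_le_mul_sin {c s : ℝ} (hc : 1 ≤ c) (hs : 0 ≤ s) (hcs : c * s ≤ π) :
    sin (c * s) ≤ c * sin s := by
  have hc0 : 0 < c := one_pos.trans_le hc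
  have h := strictConcaveOn_sin_Icc.concaveOn.2 (⟨by positivity, hcs⟩ : c * s ∈ Icc 0 π)
    (⟨le_rfl, pi_pos.le⟩ : (0:ℝ) ∈ Icc 0 π) (inv_nonneg.2 hc0.le)
    (sub_nonneg.2 (inv_le_one_of_one_le₀ hc)) (add_sub_cancel _ _)
  simp only [smul_eq_mul, mul_zero, add_zero, sin_zero, inv_mul_cancel_left₀ hc0.ne'] at h
  calc sin (c * s) = c * (c⁻¹ * sin (c * s)) := (mul_inv_cancel_left₀ hc0.ne' _).symm
    _ ≤ c * sin s := mul_le_mul_of_nonneg_left h hc0.le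

lemma cos_two_mul_sub_cos_two_mul_dilate_le {c t β : ℝ} (hc : 1 ≤ c) (ht : 0 ≤ t) (htβ : t ≤ β)
    (hcβ : c * β ≤ π / 2) :
    cos (2 * (c * t)) - cos (2 * (c * β)) ≤ c ^ 2 * (cos (2 * t) - cos (2 * β)) := by
  have hc0 : 0 ≤ c := zero_le_one.trans hc
  have hct : c * t ≤ c * β := mul_le_mul_of_nonneg_left htβ hc0
  have hsum : sin (c * (t + β)) ≤ c * sin (t + β) :=
    sin_mul_le_mul_sin hc (by linarith) (by linarith [mul_add c t β])
  have hdiff_le : c * (β - t) ≤ π := by nlinarith [mul_sub c β t, mul_nonneg hc0 ht]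
  have hdiff : sin (c * (β - t)) ≤ c * sin (β - t) :=
    sin_mul_le_mul_sin hc (by linarith) hdiff_le
  have hdiff0 : 0 ≤ sin (c * (β - t)) :=
    sin_nonneg_of_nonneg_of_le_pi (mul_nonneg hc0 (by linarith)) hdiff_le
  have hsum0 : 0 ≤ c * sin (t + β) :=
    mul_nonneg hc0 (sin_nonneg_of_nonneg_of_le_pi (by linarith) (by nlinarith))
  rw [cos_two_mul_sub_cos_two_mul, cos_two_mul_sub_cos_two_mul, ← mul_add, ← mul_sub]
  nlinarith [mul_le_mul hsum hdiff hdiff0 hsum0]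

lemma timeIntegrand_le_mul_timeIntegrand_dilate {c t β : ℝ} (hc : 1 ≤ c) (ht : 0 ≤ t)
    (htβ : t < β) (hcβ : c * β ≤ π / 2) :
    timeIntegrand β t ≤ c * timeIntegrand (c * β) (c * t) := by
  have hc0 : 0 < c := one_pos.trans_le hc
  have hA := cos_two_mul_sub_cos_two_mul_pos ht htβ (by nlinarith)
  have hB := cos_two_mul_sub_cos_two_mul_pos (by positivity)
    (mul_lt_mul_of_pos_left htβ hc0) hcβ
  have hsqrt : √(cos (2 * (c * t)) - cos (2 * (c * β))) ≤ c * √(cos (2 * t) - cos (2 * β)) := by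
    calc _ ≤ √(c ^ 2 * (cos (2 * t) - cos (2 * β))) :=
          sqrt_le_sqrt (cos_two_mul_sub_cos_two_mul_dilate_le hc ht htβ.le hcβ)
      _ = _ := by rw [sqrt_mul (by positivity), sqrt_sq hc0.le]
  rw [timeIntegrand, timeIntegrand, mul_one_div,
    div_le_div_iff₀ (sqrt_pos.2 hA) (sqrt_pos.2 hB), one_mul]
  exact hsqrt

lemma mul_sub_le_cos_two_mul_sub_cos_two_mul {α x : ℝ} (hx : 0 ≤ x) (hxα : x ≤ α)
    (hα : α ≤ π / 2) : 2 / π * sin (2 * α) * (α - x) ≤ cos (2 * x) - cos (2 * α) := by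
  have hsinα : 0 ≤ sin α := sin_nonneg_of_nonneg_of_le_pi (by linarith) (by linarith)
  have hcosα : 0 ≤ cos α := cos_nonneg_of_neg_pi_div_two_le_of_le (by linarith) hα
  have hsum : sin α * cos α ≤ sin (x + α) := by
    have hcos : cos α ≤ cos x := cos_le_cos_of_nonneg_of_le_pi hx (by linarith) hxα
    have hsinx : 0 ≤ sin x := sin_nonneg_of_nonneg_of_le_pi hx (by linarith)
    rw [sin_add]
    nlinarith [mul_nonneg hsinx hcosα, mul_le_mul_of_nonneg_left hcos hsinα]
  have hdiff : 2 / π * (α - x) ≤ sin (α - x) := mul_le_sin (by linarith) (by linarith)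
  have hjordan0 : 0 ≤ 2 / π * (α - x) := mul_nonneg (by positivity) (by linarith)
  rw [cos_two_mul_sub_cos_two_mul, sin_two_mul]
  nlinarith [mul_le_mul hsum hdiff hjordan0 ((mul_nonneg hsinα hcosα).trans hsum)]

lemma intervalIntegrable_timeIntegrand_zero {α : ℝ} (h0 : 0 < α) (hα : α < π / 2) :
    IntervalIntegrable (timeIntegrand α) volume 0 α := by
  set C := 2 / π * sin (2 * α)
  have hC : 0 < C := mul_pos (by positivity) (sin_pos_of_pos_of_lt_pi (by linarith) (by linarith))
  have hdom : IntervalIntegrable (fun x => (√C)⁻¹ * (α - x) ^ (-(1 / 2) : ℝ)) volume 0 α := by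
    have h := (intervalIntegrable_rpow' (a := α) (b := 0)
      (by norm_num : (-1 : ℝ) < -(1 / 2))).comp_sub_left α
    simp only [sub_self, sub_zero] at h
    exact h.const_mul _
  have hmeas : Measurable (timeIntegrand α) := by unfold timeIntegrand; fun_prop
  refine hdom.mono_fun' hmeas.aestronglyMeasurable ?_
  rw [uIoc_of_le h0.le]
  refine (ae_restrict_iff' measurableSet_Ioc).2 (Filter.Eventually.of_forall fun x hx => ?_)
  rcases hx.2.eq_or_lt with rfl | hxα
  · simp [timeIntegrand] -- the junk value `1 / √0 = 0`
  have hαx : 0 < α - x := sub_pos.2 hxα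
  dsimp only
  rw [Real.norm_of_nonneg (timeIntegrand_pos hx.1.le hxα hα.le).le, timeIntegrand,
    rpow_neg hαx.le, ← sqrt_eq_rpow, ← mul_inv, ← sqrt_mul hC.le, one_div]
  exact inv_anti₀ (sqrt_pos.2 (mul_pos hC hαx))
    (sqrt_le_sqrt (mul_sub_le_cos_two_mul_sub_cos_two_mul hx.1.le hx.2 hα.le))

lemma intervalIntegrable_timeIntegrand {α a b : ℝ} (h0 : 0 < α) (hα : α < π / 2)
    (ha : a ∈ Icc 0 α) (hb : b ∈ Icc 0 α) :
    IntervalIntegrable (timeIntegrand α) volume a b := by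
  rw [← uIcc_of_le h0.le] at ha hb
  exact (intervalIntegrable_timeIntegrand_zero h0 hα).mono_set (uIcc_subset_uIcc ha hb)

lemma timeMapT_monotoneOn : MonotoneOn timeMapT (Ioo 0 (π / 2)) := by
  intro β ⟨hβ0, _⟩ α ⟨hα0, hα⟩ hβα
  set c := α / β
  have hc : 1 ≤ c := (one_le_div hβ0).2 hβα
  have hc0 : c ≠ 0 := by positivity
  have hcβ : c * β = α := div_mul_cancel₀ α hβ0.ne'
  have hsubst : timeMapT α = ∫ t in (0:ℝ)..β, c * timeIntegrand α (c * t) := by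
    rw [intervalIntegral.integral_const_mul, integral_comp_mul_left _ hc0, mul_zero, hcβ,
      smul_eq_mul, mul_inv_cancel_left₀ hc0]
    rfl
  have hint : IntervalIntegrable (fun t => c * timeIntegrand α (c * t)) volume 0 β := by
    have h := (intervalIntegrable_timeIntegrand_zero hα0 hα).comp_mul_left (c := c)
    rw [zero_div, div_eq_of_eq_mul hc0 (hcβ.symm.trans (mul_comm c β))] at h
    exact h.const_mul c
  rw [hsubst]
  refine integral_mono_on_of_le_Ioo hβ0.le
    (intervalIntegrable_timeIntegrand_zero hβ0 (hβα.trans_lt hα)) hint fun t ht => ?_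
  have h := timeIntegrand_le_mul_timeIntegrand_dilate hc ht.1.le ht.2 (hcβ ▸ hα.le)
  rwa [hcβ] at h

lemma timeMapT1_lt_timeMapT1_right {α φ ψ : ℝ} (hφ : 0 ≤ φ) (hφψ : φ < ψ) (hψα : ψ ≤ α)
    (hα : α < π / 2) : timeMapT1 α φ < timeMapT1 α ψ := by
  have h0 : 0 < α := by linarith
  have hφ' : φ ∈ Icc 0 α := ⟨hφ, by linarith⟩
  have hψ' : ψ ∈ Icc 0 α := ⟨by linarith, hψα⟩
  have hzero : (0:ℝ) ∈ Icc 0 α := ⟨le_rfl, h0.le⟩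
  rw [← sub_pos, timeMapT1_eq_integral, timeMapT1_eq_integral,
    integral_interval_sub_left (intervalIntegrable_timeIntegrand h0 hα hzero hψ')
      (intervalIntegrable_timeIntegrand h0 hα hzero hφ')]
  exact intervalIntegral_pos_of_pos_on (intervalIntegrable_timeIntegrand h0 hα hφ' hψ')
    (fun x hx => timeIntegrand_pos (hφ.trans hx.1.le) (hx.2.trans_le hψα) hα.le) hφψ

lemma timeMapT1_le_timeMapT1_left {α β φ : ℝ} (hφ : 0 ≤ φ) (hφβ : φ < β) (hβα : β ≤ α)
    (hα : α < π / 2) : timeMapT1 α φ ≤ timeMapT1 β φ := by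
  have hβ0 : 0 < β := hφ.trans_lt hφβ
  exact integral_mono_on hφ
    (intervalIntegrable_timeIntegrand (hβ0.trans_le hβα) hα ⟨le_rfl, by linarith⟩ ⟨hφ, by linarith⟩)
    (intervalIntegrable_timeIntegrand hβ0 (by linarith) ⟨le_rfl, hβ0.le⟩ ⟨hφ, hφβ.le⟩)
    fun x hx => timeIntegrand_le_of_le hx.1 (hx.2.trans_lt hφβ) hβα hα.le

lemma timeMapT1_sub_timeMapT1_lt {α β φ : ℝ} (hφ : 0 ≤ φ) (hφβ : φ < β) (hβα : β < α)
    (hα : α < π / 2) : timeMapT1 α β - timeMapT1 α φ < timeMapT β - timeMapT1 β φ := by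
  have hβ0 : 0 < β := hφ.trans_lt hφβ
  have hα0 : 0 < α := hβ0.trans hβα
  have hintα {a b : ℝ} (ha : a ∈ Icc 0 β) (hb : b ∈ Icc 0 β) :=
    intervalIntegrable_timeIntegrand hα0 hα ⟨ha.1, ha.2.trans hβα.le⟩ ⟨hb.1, hb.2.trans hβα.le⟩
  have hintβ {a b : ℝ} (ha : a ∈ Icc 0 β) (hb : b ∈ Icc 0 β) :=
    intervalIntegrable_timeIntegrand hβ0 (hβα.trans hα) ha hb
  have hzero : (0:ℝ) ∈ Icc 0 β := ⟨le_rfl, hβ0.le⟩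
  have hφ' : φ ∈ Icc 0 β := ⟨hφ, hφβ.le⟩
  have hβ' : β ∈ Icc 0 β := ⟨hβ0.le, le_rfl⟩
  rw [timeMapT_eq_timeMapT1, timeMapT1_eq_integral, timeMapT1_eq_integral,
    timeMapT1_eq_integral, timeMapT1_eq_integral,
    integral_interval_sub_left (hintα hzero hβ') (hintα hzero hφ'),
    integral_interval_sub_left (hintβ hzero hβ') (hintβ hzero hφ'), ← sub_pos,
    ← integral_sub (hintβ hφ' hβ') (hintα hφ' hβ')]
  exact intervalIntegral_pos_of_pos_on ((hintβ hφ' hβ').sub (hintα hφ' hβ'))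
    (fun x hx => sub_pos.2 (timeIntegrand_lt_of_lt (hφ.trans hx.1.le) hx.2 hβα hα.le)) hφβ

/-- For `0 < φ₀ < φ₁ < π/2`, `k ∈ ℕ` and `α ∈ (φ₁, π/2)`, the times of the
`k`-winding orbits of types `C_r` and `D` exceed the critical times
`T_{*k}(φ₁) = (4k+1)T(φ₁) + T₁(φ₁, φ₀)` and
`T_k^*(φ₁) = (4k+3)T(φ₁) − T₁(φ₁, φ₀)`, respectively. -/
theorem winding_orbit_times_exceed_critical (φ₀ φ₁ : ℝ) (h₀ : 0 < φ₀)
    (h₀₁ : φ₀ < φ₁) (h₁ : φ₁ < π / 2) (k : ℕ) (α : ℝ)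
    (hα : α ∈ Set.Ioo φ₁ (π / 2)) :
    (4 * (k : ℝ) + 2) * timeMapT α + timeMapT1 α φ₀ - timeMapT1 α φ₁ >
      (4 * (k : ℝ) + 1) * timeMapT φ₁ + timeMapT1 φ₁ φ₀ ∧
    4 * ((k : ℝ) + 1) * timeMapT α - timeMapT1 α φ₀ - timeMapT1 α φ₁ >
      (4 * (k : ℝ) + 3) * timeMapT φ₁ - timeMapT1 φ₁ φ₀ := by
  obtain ⟨hφ₁α, hαπ⟩ := hα
  have hT : timeMapT φ₁ ≤ timeMapT α :=
    timeMapT_monotoneOn ⟨h₀.trans h₀₁, h₁⟩ ⟨h₀.trans (h₀₁.trans hφ₁α), hαπ⟩ hφ₁α.le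
  have hmiddle : timeMapT1 α φ₁ - timeMapT1 α φ₀ < timeMapT φ₁ - timeMapT1 φ₁ φ₀ :=
    timeMapT1_sub_timeMapT1_lt h₀.le h₀₁ hφ₁α hαπ
  have hhead : timeMapT1 α φ₀ ≤ timeMapT1 φ₁ φ₀ :=
    timeMapT1_le_timeMapT1_left h₀.le h₀₁ hφ₁α.le hαπ
  have htail : timeMapT1 α φ₁ < timeMapT α :=
    timeMapT1_lt_timeMapT1_right (h₀.trans h₀₁).le hφ₁α le_rfl hαπ
  have hkT : (k : ℝ) * timeMapT φ₁ ≤ k * timeMapT α :=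
    mul_le_mul_of_nonneg_left hT k.cast_nonneg
  constructor <;> linarith
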